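/- arXiv:2201.11185 — 3 statements merged into one kernel-verified Lean document; each statement's English description precedes it below -/
import Mathlib

section
/- If f, g : Γ₁ → Γ₂ are two contractions between marked n-trees, then f = g. In particular, a contraction between two marked n-trees, if it exists, is unique. -/
/-!
Cut `Γ₂` along an edge `ww'`. For a contraction `f`, the fibres over `w` and `w'` are connected
subtrees of `Γ₁`, so exactly one edge `ab` of `Γ₁` runs from `f⁻¹(w)` to `f⁻¹(w')`, and `f`
pulls the `w`-side of `ww'` back to the `a`-side of `ab`. Marks are fixed by `f`, so the marks on
the `a`-side are those on the `w`-side. In a marked tree an oriented edge is determined by the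
marks on its side: between two edges with the same marked sides, a vertex farthest from one of
them has degree at most two but is unmarked. Hence `f` and `g` cross the same edge `ab` over
`ww'` and pull back every side of `Γ₂` alike; since a vertex `w` is the intersection of the sides
of `w` of its edges, `f x = g x`.
-/

/-- A marked `n`-tree: a finite tree with `n` labeled marked vertices such that
every vertex of valence (degree) `1` or `2` is marked. -/
structure MarkedTree (n : ℕ) where
  V : Type
  fintypeV : Fintype V
  G : SimpleGraph V
  isTree : G.IsTree
  mark : Fin n → V
  mark_inj : Function.Injective mark
  degCond : ∀ v : V, (G.neighborSet v).ncard ≤ 2 → v ∈ Set.range mark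

/-- A contraction of marked `n`-trees: a surjective cellular (simplicial) map such that
the preimage of every vertex is a subtree (nonempty connected), and marked vertices
map to the corresponding marked vertices. -/
structure TreeContraction {n : ℕ} (T₁ T₂ : MarkedTree n) where
  f : T₁.V → T₂.V
  surj : Function.Surjective f
  map_adj : ∀ {a b : T₁.V}, T₁.G.Adj a b → f a = f b ∨ T₂.G.Adj (f a) (f b)
  fiber_conn : ∀ w : T₂.V, (T₁.G.induce (f ⁻¹' {w})).Connected
  map_mark : ∀ i, f (T₁.mark i) = T₂.mark i

/-- The contracted subforest `F(T₁,T₂)` of a contraction: the set of edges of `T₁`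
whose endpoints are identified by the contraction. -/
def TreeContraction.forest {n : ℕ} {T₁ T₂ : MarkedTree n} (c : TreeContraction T₁ T₂) :
    Set (Sym2 T₁.V) :=
  {e | ∃ a b : T₁.V, e = s(a, b) ∧ T₁.G.Adj a b ∧ c.f a = c.f b}

/-- A label-preserving isomorphism of marked `n`-trees. -/
structure MarkedIso {n : ℕ} (T₁ T₂ : MarkedTree n) where
  e : T₁.V ≃ T₂.V
  adj_iff : ∀ a b : T₁.V, T₁.G.Adj a b ↔ T₂.G.Adj (e a) (e b)
  map_mark : ∀ i, e (T₁.mark i) = T₂.mark i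

namespace SimpleGraph

variable {V W : Type*} {G : SimpleGraph V} {H : SimpleGraph W}

lemma Reachable.map_of_eq_or_adj {f : V → W}
    (hf : ∀ ⦃u v : V⦄, G.Adj u v → f u = f v ∨ H.Adj (f u) (f v)) {x y : V}
    (h : G.Reachable x y) : H.Reachable (f x) (f y) := by
  obtain ⟨p⟩ := h
  induction p with
  | nil => rfl
  | cons huv _ ih => exact (hf huv).elim (· ▸ ih) (·.reachable.trans ih)

lemma Reachable.mem_of_forall_adj_mem {s : Set V}
    (hs : ∀ ⦃y z : V⦄, y ∈ s → G.Adj y z → z ∈ s) {x y : V} (h : G.Reachable x y)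
    (hx : x ∈ s) : y ∈ s := by
  obtain ⟨p⟩ := h
  induction p with
  | nil => exact hx
  | cons huv _ ih => exact ih (hs hx huv)

def edgeSide (G : SimpleGraph V) (a b : V) : Set V :=
  {x | (G.deleteEdges {s(a, b)}).Reachable a x}

lemma self_mem_edgeSide (a b : V) : a ∈ G.edgeSide a b := Reachable.refl a

lemma mem_edgeSide_of_adj {a b y z : V} (hy : y ∈ G.edgeSide a b) (hyz : G.Adj y z)
    (hne : s(y, z) ≠ s(a, b)) : z ∈ G.edgeSide a b :=
  hy.trans (deleteEdges_adj.mpr ⟨hyz, hne⟩).reachable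

lemma IsAcyclic.notMem_edgeSide (hG : G.IsAcyclic) {a b : V} (hab : G.Adj a b) :
    b ∉ G.edgeSide a b :=
  isBridge_iff.mp (isAcyclic_iff_forall_adj_isBridge.mp hG hab)

lemma IsAcyclic.disjoint_edgeSide (hG : G.IsAcyclic) {a b : V} (hab : G.Adj a b) :
    Disjoint (G.edgeSide a b) (G.edgeSide b a) := by
  refine Set.disjoint_left.mpr fun x hxa hxb => hG.notMem_edgeSide hab (hxa.trans ?_)
  rw [edgeSide, Sym2.eq_swap] at hxb
  exact hxb.symm

lemma Preconnected.edgeSide_union (hG : G.Preconnected) (a b : V) :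
    G.edgeSide a b ∪ G.edgeSide b a = Set.univ := by
  refine Set.eq_univ_of_forall fun x =>
    (hG a x).mem_of_forall_adj_mem (fun y z hy hyz => ?_) (Or.inl (self_mem_edgeSide a b))
  by_cases he : s(y, z) = s(a, b)
  · rcases Sym2.eq_iff.mp he with ⟨-, rfl⟩ | ⟨-, rfl⟩
    · exact Or.inr (self_mem_edgeSide _ _)
    · exact Or.inl (self_mem_edgeSide _ _)
  · exact hy.imp (mem_edgeSide_of_adj · hyz he)
      (mem_edgeSide_of_adj · hyz fun h => he (h.trans Sym2.eq_swap))

lemma IsTree.isCompl_edgeSide (hG : G.IsTree) {a b : V} (hab : G.Adj a b) :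
    IsCompl (G.edgeSide a b) (G.edgeSide b a) :=
  ⟨hG.isAcyclic.disjoint_edgeSide hab,
    codisjoint_iff.mpr (hG.connected.preconnected.edgeSide_union a b)⟩

lemma Preconnected.reachable_deleteEdges_of_induce {s : Set V} (hs : (G.induce s).Preconnected)
    {e : Sym2 V} {u : V} (hu : u ∉ s) (hue : u ∈ e) {x y : V} (hx : x ∈ s) (hy : y ∈ s) :
    (G.deleteEdges {e}).Reachable x y := by
  refine (hs ⟨x, hx⟩ ⟨y, hy⟩).map_of_eq_or_adj (f := Subtype.val) fun v w hvw => Or.inr ?_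
  refine deleteEdges_adj.mpr ⟨hvw, fun he => hu ?_⟩
  rcases Sym2.mem_iff.mp ((Set.mem_singleton_iff.mp he) ▸ hue) with rfl | rfl
  exacts [v.2, w.2]

lemma IsTree.eq_of_forall_mem_edgeSide (hG : G.IsTree) {w y : V}
    (h : ∀ w', G.Adj w w' → y ∈ G.edgeSide w w') : y = w := by
  by_contra hyw
  obtain ⟨p, hp, -⟩ := hG.existsUnique_path w y
  have hnil : ¬ p.Nil := Walk.not_nil_of_ne (Ne.symm hyw)
  have hadj := p.adj_snd hnil
  rw [← p.cons_tail_eq hnil, Walk.cons_isPath_iff] at hp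
  have hy : y ∈ G.edgeSide p.snd w :=
    reachable_deleteEdges_iff_exists_walk.mpr
      ⟨p.tail, fun he => hp.2 (p.tail.snd_mem_support_of_mem_edges he)⟩
  exact Set.disjoint_left.mp (hG.isAcyclic.disjoint_edgeSide hadj) (h _ hadj) hy

lemma IsTree.exists_forall_adj_dist_lt (hG : G.IsTree) (r x : V) :
    ∃ p, ∀ y, G.Adj x y → G.dist r y < G.dist r x → y = p := by
  obtain ⟨q, hq, -⟩ := hG.existsUnique_path r x
  refine ⟨q.penultimate, fun y hxy hlt => ?_⟩
  obtain ⟨s, -, hs⟩ := hG.connected.exists_path_of_dist r y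
  have hconcat : (s.concat hxy.symm).IsPath := by
    refine Walk.isPath_of_length_eq_dist _ ?_
    have := hG.dist_eq_dist_add_one_of_adj r hxy
    rw [Walk.length_concat, hs]
    omega
  rw [(hG.existsUnique_path r x).unique hq hconcat, Walk.penultimate_concat]

lemma IsTree.edgeSide_subset_of_inter_subset [Finite V] (hG : G.IsTree) {S : Set V}
    (hS : ∀ v, (G.neighborSet v).ncard ≤ 2 → v ∈ S) {a b a' b' : V} (hab : G.Adj a b)
    (h : G.edgeSide a b ∩ S ⊆ G.edgeSide a' b') : G.edgeSide a b ⊆ G.edgeSide a' b' := by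
  by_contra hsub
  set M := G.edgeSide a b \ G.edgeSide a' b'
  -- A vertex of `M` farthest from `b` has its parent and at most `a'` as neighbours.
  obtain ⟨x, hxM, hmax⟩ :=
    M.toFinite.exists_maximalFor (G.dist b) M (Set.sdiff_nonempty.mpr hsub)
  obtain ⟨p, hp⟩ := hG.exists_forall_adj_dist_lt b x
  have hnbr : G.neighborSet x ⊆ {p, a'} := by
    intro y hxy
    rcases hG.dist_eq_dist_add_one_of_adj b hxy with hlt | hgt
    · exact Or.inl (hp y hxy (by omega))
    have hyM : y ∉ M := fun hyM => by have := hmax hyM (by omega); omega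
    have hy : y ∈ G.edgeSide a b := by
      refine mem_edgeSide_of_adj hxM.1 hxy fun he => ?_
      rcases Sym2.eq_iff.mp he with ⟨rfl, rfl⟩ | ⟨rfl, -⟩
      · simp at hgt
      · exact hG.isAcyclic.notMem_edgeSide hab hxM.1
    have hy' : y ∈ G.edgeSide a' b' := by_contra fun h => hyM ⟨hy, h⟩
    refine Or.inr (by_contra fun hya' => hxM.2 ?_)
    refine mem_edgeSide_of_adj hy' hxy.symm fun he => ?_
    rcases Sym2.eq_iff.mp he with ⟨rfl, -⟩ | ⟨-, rfl⟩
    · exact hya' rfl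
    · exact hxM.2 (self_mem_edgeSide _ _)
  have hx : x ∈ S := hS x <| (Set.ncard_le_ncard hnbr).trans <|
    (Set.ncard_insert_le _ _).trans (by simp)
  exact hxM.2 (h ⟨hxM.1, hx⟩)

lemma IsTree.eq_of_edgeSide_eq (hG : G.IsTree) {a b a' b' : V} (hab : G.Adj a b)
    (hab' : G.Adj a' b') (h : G.edgeSide a b = G.edgeSide a' b') : a = a' ∧ b = b' := by
  have ha : a ∈ G.edgeSide a' b' := h ▸ self_mem_edgeSide a b
  have he : s(a, b) = s(a', b') := by
    by_contra he
    exact (h ▸ hG.isAcyclic.notMem_edgeSide hab) (mem_edgeSide_of_adj ha hab he)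
  rcases Sym2.eq_iff.mp he with h' | ⟨rfl, rfl⟩
  · exact h'
  · exact absurd ha (hG.isAcyclic.notMem_edgeSide hab')

lemma IsTree.eq_of_edgeSide_inter_eq [Finite V] (hG : G.IsTree) {S : Set V}
    (hS : ∀ v, (G.neighborSet v).ncard ≤ 2 → v ∈ S) {a b a' b' : V} (hab : G.Adj a b)
    (hab' : G.Adj a' b') (h : G.edgeSide a b ∩ S = G.edgeSide a' b' ∩ S) : a = a' ∧ b = b' :=
  hG.eq_of_edgeSide_eq hab hab' <|
    (hG.edgeSide_subset_of_inter_subset hS hab (h.subset.trans Set.inter_subset_left)).antisymm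
      (hG.edgeSide_subset_of_inter_subset hS hab' (h.symm.subset.trans Set.inter_subset_left))

end SimpleGraph

open SimpleGraph

namespace TreeContraction

variable {n : ℕ} {T₁ T₂ : MarkedTree n} (c : TreeContraction T₁ T₂)

lemma reachable_deleteEdges_of_map_eq {x y u : T₁.V} {e : Sym2 T₁.V} (hxy : c.f x = c.f y)
    (hu : c.f u ≠ c.f x) (hue : u ∈ e) : (T₁.G.deleteEdges {e}).Reachable x y :=
  (c.fiber_conn (c.f x)).preconnected.reachable_deleteEdges_of_induce hu hue rfl hxy.symm

/-- Between two distinct fibres there is at most one edge: a second one would close a cycle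
through the two connected fibres. -/
lemma eq_of_adj_of_map_eq {a b a' b' : T₁.V} (hab : T₁.G.Adj a b) (hab' : T₁.G.Adj a' b')
    (hne : c.f a ≠ c.f b) (ha : c.f a' = c.f a) (hb : c.f b' = c.f b) : a' = a ∧ b' = b := by
  have h₁ := c.reachable_deleteEdges_of_map_eq ha.symm hne.symm (Sym2.mem_mk_right a b)
  have h₂ := c.reachable_deleteEdges_of_map_eq hb (hb ▸ hne) (Sym2.mem_mk_left a b)
  have he : s(a', b') = s(a, b) := by_contra fun he => T₁.isTree.isAcyclic.notMem_edgeSide hab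
    (h₁.trans ((deleteEdges_adj.mpr ⟨hab', he⟩).reachable.trans h₂))
  rcases Sym2.eq_iff.mp he with h | ⟨rfl, rfl⟩
  exacts [h, absurd ha hne.symm]

lemma exists_adj_map_eq {w w' : T₂.V} (h : T₂.G.Adj w w') :
    ∃ a b, T₁.G.Adj a b ∧ c.f a = w ∧ c.f b = w' := by
  by_contra! hcon
  have hmap ⦃u v : T₁.V⦄ (huv : T₁.G.Adj u v) :
      c.f u = c.f v ∨ (T₂.G.deleteEdges {s(w, w')}).Adj (c.f u) (c.f v) := by
    refine (c.map_adj huv).imp_right fun hadj => deleteEdges_adj.mpr ⟨hadj, fun he => ?_⟩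
    rcases Sym2.eq_iff.mp he with ⟨hu, hv⟩ | ⟨hu, hv⟩
    exacts [hcon u v huv hu hv, hcon v u huv.symm hv hu]
  obtain ⟨x, rfl⟩ := c.surj w
  obtain ⟨y, rfl⟩ := c.surj w'
  exact T₂.isTree.isAcyclic.notMem_edgeSide h ((T₁.isTree.connected x y).map_of_eq_or_adj hmap)

lemma mapsTo_edgeSide {a b : T₁.V} (hab : T₁.G.Adj a b) (hne : c.f a ≠ c.f b) :
    Set.MapsTo c.f (T₁.G.edgeSide a b) (T₂.G.edgeSide (c.f a) (c.f b)) := by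
  refine fun x hx => hx.map_of_eq_or_adj fun u v huv => ?_
  obtain ⟨huv, he⟩ := deleteEdges_adj.mp huv
  refine (c.map_adj huv).imp_right fun hadj => deleteEdges_adj.mpr ⟨hadj, fun he' => he ?_⟩
  rcases Sym2.eq_iff.mp he' with ⟨hu, hv⟩ | ⟨hu, hv⟩
  · obtain ⟨rfl, rfl⟩ := c.eq_of_adj_of_map_eq hab huv hne hu hv
    rfl
  · obtain ⟨rfl, rfl⟩ := c.eq_of_adj_of_map_eq hab huv.symm hne hv hu
    exact Sym2.eq_swap

lemma preimage_edgeSide {a b : T₁.V} (hab : T₁.G.Adj a b) (hne : c.f a ≠ c.f b) :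
    c.f ⁻¹' T₂.G.edgeSide (c.f a) (c.f b) = T₁.G.edgeSide a b := by
  refine subset_antisymm (fun x hx => ?_) (c.mapsTo_edgeSide hab hne)
  have hadj : T₂.G.Adj (c.f a) (c.f b) := (c.map_adj hab).resolve_left hne
  by_contra hx'
  have hxb : x ∈ T₁.G.edgeSide b a := (T₁.isTree.isCompl_edgeSide hab).compl_eq ▸ hx'
  exact Set.disjoint_left.mp (T₂.isTree.isAcyclic.disjoint_edgeSide hadj) hx
    (c.mapsTo_edgeSide hab.symm hne.symm hxb)

lemma preimage_inter_range_mark (c' : TreeContraction T₁ T₂) (X : Set T₂.V) :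
    c.f ⁻¹' X ∩ Set.range T₁.mark = c'.f ⁻¹' X ∩ Set.range T₁.mark := by
  ext x
  constructor <;> rintro ⟨hx, i, rfl⟩ <;> refine ⟨?_, i, rfl⟩ <;>
    simpa only [Set.mem_preimage, map_mark] using hx

lemma preimage_edgeSide_eq (c' : TreeContraction T₁ T₂) {w w' : T₂.V} (h : T₂.G.Adj w w') :
    c.f ⁻¹' T₂.G.edgeSide w w' = c'.f ⁻¹' T₂.G.edgeSide w w' := by
  obtain ⟨a, b, hab, rfl, rfl⟩ := c.exists_adj_map_eq h
  obtain ⟨a', b', hab', ha', hb'⟩ := c'.exists_adj_map_eq h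
  have hside' := c'.preimage_edgeSide hab' (ha' ▸ hb' ▸ h.ne)
  rw [ha', hb'] at hside'
  have hmarks : T₁.G.edgeSide a b ∩ Set.range T₁.mark =
      T₁.G.edgeSide a' b' ∩ Set.range T₁.mark := by
    rw [← c.preimage_edgeSide hab h.ne, ← hside', preimage_inter_range_mark]
  have := T₁.fintypeV
  obtain ⟨rfl, rfl⟩ := T₁.isTree.eq_of_edgeSide_inter_eq T₁.degCond hab hab' hmarks
  rw [c.preimage_edgeSide hab h.ne, hside']

end TreeContraction

/-- A contraction between two marked `n`-trees, if it exists, is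
unique: any two contractions `Γ₁ → Γ₂` are equal. -/
theorem treeContraction_unique {n : ℕ} (T₁ T₂ : MarkedTree n)
    (c₁ c₂ : TreeContraction T₁ T₂) : c₁.f = c₂.f := by
  funext x
  refine (T₂.isTree.eq_of_forall_mem_edgeSide fun w' h => ?_).symm
  have hx : x ∈ c₁.f ⁻¹' T₂.G.edgeSide (c₁.f x) w' := self_mem_edgeSide _ _
  rwa [c₁.preimage_edgeSide_eq c₂ h] at hx
end

section
/- Let Γ, Γ₁, Γ₂ be marked n-trees with contractions Γ → Γ₁ and Γ → Γ₂. Then there is a contraction Γ₁ → Γ₂ if and only if the subforest F(Γ,Γ₁) is a subforest of F(Γ,Γ₂). -/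
namespace SimpleGraph

variable {V W X : Type*} {G : SimpleGraph V} {H : SimpleGraph W} {K : SimpleGraph X}

def Between (G : SimpleGraph V) (x v y : V) : Prop :=
  G.dist x v + G.dist v y = G.dist x y

def PreservesBetween (G : SimpleGraph V) (H : SimpleGraph W) (f : V → W) : Prop :=
  ∀ ⦃x v y⦄, G.Between x v y → H.Between (f x) (f v) (f y)

theorem PreservesBetween.comp {g : W → X} {f : V → W} (hg : H.PreservesBetween K g)
    (hf : G.PreservesBetween H f) : G.PreservesBetween K (g ∘ f) :=
  fun _ _ _ h ↦ hg (hf h)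

theorem IsAcyclic.length_eq_dist (hG : G.IsAcyclic) {u v : V} {p : G.Walk u v} (hp : p.IsPath) :
    p.length = G.dist u v := by
  obtain ⟨q, hq, hlen⟩ := p.reachable.exists_path_of_dist
  rw [← hlen, Subtype.mk.inj ((hG.subsingleton_path u v).elim ⟨p, hp⟩ ⟨q, hq⟩)]

theorem IsAcyclic.between_of_mem_support (hG : G.IsAcyclic) {u v z : V} {p : G.Walk u v}
    (hp : p.IsPath) (hz : z ∈ p.support) : G.Between u z v := by
  classical
  rw [Between, ← hG.length_eq_dist (hp.takeUntil hz), ← hG.length_eq_dist (hp.dropUntil hz),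
    ← hG.length_eq_dist hp, ← Walk.length_append, p.take_spec hz]

theorem IsTree.mem_support_of_between (hG : G.IsTree) {u v z : V} {p : G.Walk u v}
    (hp : p.IsPath) (hz : G.Between u z v) : z ∈ p.support := by
  obtain ⟨q₁, -, hq₁⟩ := hG.connected.exists_path_of_dist u z
  obtain ⟨q₂, -, hq₂⟩ := hG.connected.exists_path_of_dist z v
  have hq : (q₁.append q₂).IsPath :=
    Walk.isPath_of_length_eq_dist _ (by rw [Walk.length_append, hq₁, hq₂, hz])
  rw [Subtype.mk.inj ((hG.isAcyclic.subsingleton_path u v).elim ⟨p, hp⟩ ⟨_, hq⟩),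
    Walk.mem_support_append_iff]
  exact Or.inl q₁.end_mem_support

theorem IsAcyclic.getVert_dist_of_mem_support (hG : G.IsAcyclic) {u v z : V} {p : G.Walk u v}
    (hp : p.IsPath) (hz : z ∈ p.support) : p.getVert (G.dist u z) = z := by
  classical
  rw [← hG.length_eq_dist (hp.takeUntil hz), p.getVert_length_takeUntil hz]

theorem IsTree.eq_of_between {a b d z z' : V} (hG : G.IsTree)
    (hab : G.Between a z b) (had : G.Between a z d) (hbd : G.Between b z d)
    (hab' : G.Between a z' b) (had' : G.Between a z' d) (hbd' : G.Between b z' d) : z = z' := by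
  unfold Between at *
  have hdist : G.dist a z = G.dist a z' := by
    rw [dist_comm (u := z) (v := b)] at hab
    rw [dist_comm (u := z') (v := b)] at hab'
    omega
  obtain ⟨p, hp, -⟩ := hG.connected.exists_path_of_dist a b
  rw [← hG.isAcyclic.getVert_dist_of_mem_support hp (hG.mem_support_of_between hp hab),
    ← hG.isAcyclic.getVert_dist_of_mem_support hp (hG.mem_support_of_between hp hab'), hdist]

theorem IsAcyclic.between_of_isPath_cons {v u₁ u₂ w₁ w₂ : V} (hG : G.IsAcyclic)
    {h₁ : G.Adj v u₁} {h₂ : G.Adj v u₂} {p₁ : G.Walk u₁ w₁} {p₂ : G.Walk u₂ w₂}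
    (hp₁ : (Walk.cons h₁ p₁).IsPath) (hp₂ : (Walk.cons h₂ p₂).IsPath) (hu : u₁ ≠ u₂) :
    G.Between w₁ v w₂ := by
  -- in an acyclic graph a walk is a path as soon as it never immediately backtracks
  have hp : ((Walk.cons h₁ p₁).reverse.append (Walk.cons h₂ p₂)).IsPath := by
    rw [hG.isPath_iff_isChain] at *
    rw [Walk.edges_append, Walk.edges_reverse, List.isChain_append]
    refine ⟨List.isChain_reverse.mpr (hp₁.imp fun _ _ h ↦ Ne.symm h), hp₂, ?_⟩
    simp [hu, h₂.ne]
  exact hG.between_of_mem_support hp (by simp)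

theorem IsAcyclic.support_subset_of_reachable_induce (hG : G.IsAcyclic) {s : Set V} {x y : V}
    (hx : x ∈ s) (hy : y ∈ s) (h : (G.induce s).Reachable ⟨x, hx⟩ ⟨y, hy⟩) {p : G.Walk x y}
    (hp : p.IsPath) : ∀ u ∈ p.support, u ∈ s := by
  classical
  obtain ⟨q⟩ := h
  let q' : G.Walk x y := q.map (Embedding.induce s).toHom
  have hq' : (q'.toPath : G.Walk x y) = p :=
    Subtype.mk.inj ((hG.subsingleton_path x y).elim q'.toPath ⟨p, hp⟩)
  intro u hu
  rw [← hq'] at hu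
  have hu' : u ∈ (q.map (Embedding.induce s).toHom).support := q'.support_toPath_subset_support hu
  rw [Walk.support_map] at hu'
  obtain ⟨⟨w, hw⟩, -, rfl⟩ := List.mem_map.mp hu'
  exact hw

theorem Reachable.map_induce {f : V → W}
    (hf : ∀ {a b}, G.Adj a b → f a = f b ∨ H.Adj (f a) (f b)) {s : Set V} {t : Set W}
    (hst : Set.MapsTo f s t) {x y : s} (h : (G.induce s).Reachable x y) :
    (H.induce t).Reachable (hst.restrict f s t x) (hst.restrict f s t y) := by
  rw [reachable_iff_reflTransGen] at h ⊢
  refine h.lift' _ fun a b hab ↦ ?_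
  rcases hf hab with he | he
  · change Relation.ReflTransGen _ (hst.restrict f s t a) (hst.restrict f s t b)
    rw [show hst.restrict f s t a = hst.restrict f s t b from Subtype.ext he]
  · exact .single he

end SimpleGraph

open SimpleGraph

namespace MarkedTree

variable {n : ℕ} (T : MarkedTree n)

instance : Fintype T.V := T.fintypeV

theorem two_lt_ncard_neighborSet {v : T.V} (hv : v ∉ Set.range T.mark) :
    2 < (T.G.neighborSet v).ncard :=
  lt_of_not_ge fun h ↦ hv (T.degCond v h)

theorem exists_isPath_cons_mark {v u : T.V} (h : T.G.Adj v u) :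
    ∃ (i : Fin n) (p : T.G.Walk u (T.mark i)), (Walk.cons h p).IsPath := by
  -- take such a path to a farthest possible endpoint `x`; if `x` were unmarked, one of its at
  -- least three neighbours would lie off the path and the path could be extended
  classical
  let A : Set T.V := {x | ∃ p : T.G.Walk u x, (Walk.cons h p).IsPath}
  have hA : A.Nonempty := ⟨u, .nil, by simp [h.ne]⟩
  obtain ⟨x, ⟨p, hp⟩, hmax⟩ := Set.exists_max_image A (T.G.dist v) A.toFinite hA
  by_contra! hno
  have hx : x ∉ Set.range T.mark := by
    rintro ⟨i, rfl⟩
    exact hno i p hp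
  obtain ⟨z, hz, hzp⟩ : ∃ z, T.G.Adj x z ∧ z ∉ (Walk.cons h p).support := by
    by_contra! hall
    have hsub : T.G.neighborSet x ⊆ {(Walk.cons h p).penultimate} := fun z hz ↦
      T.isTree.isAcyclic.eq_penultimate_of_adj_end hp hz (hall z hz)
    have := (Set.ncard_le_ncard hsub).trans_eq (Set.ncard_singleton _)
    have := T.two_lt_ncard_neighborSet hx
    omega
  have hpz : (Walk.cons h (p.concat hz)).IsPath := by
    rw [← Walk.concat_cons]
    exact hp.concat hzp hz
  have := hmax z ⟨_, hpz⟩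
  rw [← T.isTree.isAcyclic.length_eq_dist hp, ← T.isTree.isAcyclic.length_eq_dist hpz] at this
  simp at this

theorem exists_marks_between {v : T.V} (hv : v ∉ Set.range T.mark) :
    ∃ i j k, T.G.Between (T.mark i) v (T.mark j) ∧ T.G.Between (T.mark i) v (T.mark k) ∧
      T.G.Between (T.mark j) v (T.mark k) := by
  obtain ⟨u₁, u₂, u₃, hu₁, hu₂, hu₃, h₁₂, h₁₃, h₂₃⟩ :=
    (Set.two_lt_ncard_iff (Set.toFinite _)).mp (T.two_lt_ncard_neighborSet hv)
  obtain ⟨i, p₁, hp₁⟩ := T.exists_isPath_cons_mark hu₁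
  obtain ⟨j, p₂, hp₂⟩ := T.exists_isPath_cons_mark hu₂
  obtain ⟨k, p₃, hp₃⟩ := T.exists_isPath_cons_mark hu₃
  have hG := T.isTree.isAcyclic
  exact ⟨i, j, k, hG.between_of_isPath_cons hp₁ hp₂ h₁₂, hG.between_of_isPath_cons hp₁ hp₃ h₁₃,
    hG.between_of_isPath_cons hp₂ hp₃ h₂₃⟩

theorem eq_of_preservesBetween {T' : MarkedTree n} {f f' : T.V → T'.V}
    (hf : T.G.PreservesBetween T'.G f) (hf' : T.G.PreservesBetween T'.G f')
    (hfm : ∀ i, f (T.mark i) = T'.mark i) (hfm' : ∀ i, f' (T.mark i) = T'.mark i) : f = f' := by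
  funext v
  by_cases hv : v ∈ Set.range T.mark
  · obtain ⟨i, rfl⟩ := hv
    rw [hfm, hfm']
  obtain ⟨i, j, k, hij, hik, hjk⟩ := T.exists_marks_between hv
  have h₁ := hf hij
  have h₂ := hf hik
  have h₃ := hf hjk
  have h₁' := hf' hij
  have h₂' := hf' hik
  have h₃' := hf' hjk
  simp only [hfm, hfm'] at h₁ h₂ h₃ h₁' h₂' h₃'
  exact T'.isTree.eq_of_between h₁ h₂ h₃ h₁' h₂' h₃'

end MarkedTree

namespace TreeContraction

variable {n : ℕ} {T T' : MarkedTree n} (c : TreeContraction T T')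

theorem mem_forest_iff {a b : T.V} : s(a, b) ∈ c.forest ↔ T.G.Adj a b ∧ c.f a = c.f b := by
  constructor
  · rintro ⟨p, q, he, hadj, hf⟩
    rcases Sym2.eq_iff.mp he with ⟨rfl, rfl⟩ | ⟨rfl, rfl⟩
    · exact ⟨hadj, hf⟩
    · exact ⟨hadj.symm, hf.symm⟩
  · rintro ⟨hadj, hf⟩
    exact ⟨a, b, rfl, hadj, hf⟩

open Classical in
noncomputable def mapWalk (c : TreeContraction T T') :
    {x y : T.V} → T.G.Walk x y → T'.G.Walk (c.f x) (c.f y)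
  | _, _, .nil => .nil
  | x, _, .cons (v := z) h p =>
    if he : c.f x = c.f z then (c.mapWalk p).copy he.symm rfl
    else .cons ((c.map_adj h).resolve_left he) (c.mapWalk p)

theorem mem_support_mapWalk_iff {x y : T.V} (p : T.G.Walk x y) {t : T'.V} :
    t ∈ (c.mapWalk p).support ↔ t ∈ p.support.map c.f := by
  induction p with
  | nil => simp [mapWalk]
  | cons h p ih =>
    rw [mapWalk]
    split_ifs with he
    · simpa [ih, he] using fun ht : t = _ ↦ ⟨_, p.start_mem_support, ht.symm⟩
    · simp [ih]

theorem edges_mapWalk_subset {x y : T.V} (p : T.G.Walk x y) :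
    (c.mapWalk p).edges ⊆ p.edges.map (Sym2.map c.f) := by
  induction p with
  | nil => simp [mapWalk]
  | cons h p ih =>
    rw [mapWalk]
    split_ifs
    · rw [Walk.edges_copy, Walk.edges_cons, List.map_cons]
      exact List.Subset.trans ih (List.subset_cons_self _ _)
    · rw [Walk.edges_cons, Walk.edges_cons, List.map_cons, Sym2.map_mk]
      exact List.cons_subset_cons _ ih

theorem map_eq_of_mem_support {x y u : T.V} (hxy : c.f x = c.f y) {p : T.G.Walk x y}
    (hp : p.IsPath) (hu : u ∈ p.support) : c.f u = c.f x :=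
  T.isTree.isAcyclic.support_subset_of_reachable_induce (s := c.f ⁻¹' {c.f x}) rfl hxy.symm
    ((c.fiber_conn _).preconnected _ _) hp u hu

theorem isPath_mapWalk {x y : T.V} {p : T.G.Walk x y} (hp : p.IsPath) : (c.mapWalk p).IsPath := by
  classical
  induction p with
  | nil => exact .nil
  | @cons x z y h p ih =>
    rw [Walk.cons_isPath_iff] at hp
    rw [mapWalk]
    split_ifs with he
    · exact (Walk.isPath_copy ..).mpr (ih hp.1)
    · refine (ih hp.1).cons fun hx ↦ he ?_
      -- the path from `x` through `z` to a vertex `u` of the fibre of `x` stays in that fibre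
      obtain ⟨u, hu, hux⟩ := List.mem_map.mp ((c.mem_support_mapWalk_iff p).mp hx)
      have hq : (Walk.cons h (p.takeUntil u hu)).IsPath :=
        (hp.1.takeUntil hu).cons fun hx' ↦ hp.2 (p.support_takeUntil_subset_support hu hx')
      exact (c.map_eq_of_mem_support hux.symm hq (by simp)).symm

theorem preservesBetween : T.G.PreservesBetween T'.G c.f := by
  intro x v y hv
  obtain ⟨p, hp, -⟩ := T.isTree.connected.exists_path_of_dist x y
  exact T'.isTree.isAcyclic.between_of_mem_support (c.isPath_mapWalk hp)
    ((c.mem_support_mapWalk_iff p).mpr (List.mem_map_of_mem (T.isTree.mem_support_of_between hp hv)))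

theorem exists_adj_map_eq_s13 {a b : T'.V} (hab : T'.G.Adj a b) :
    ∃ p q, T.G.Adj p q ∧ c.f p = a ∧ c.f q = b := by
  obtain ⟨x, rfl⟩ := c.surj a
  obtain ⟨y, rfl⟩ := c.surj b
  obtain ⟨p⟩ := T.isTree.connected x y
  have hbridge := isAcyclic_iff_forall_adj_isBridge.mp T'.isTree.isAcyclic hab
  obtain ⟨e, he, hee⟩ := List.mem_map.mp
    (c.edges_mapWalk_subset p (isBridge_iff_forall_walk_mem_edges.mp hbridge (c.mapWalk p)))
  induction e using Sym2.ind with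
  | h q r =>
    have hqr := p.adj_of_mem_edges he
    rcases Sym2.eq_iff.mp hee with ⟨hq, hr⟩ | ⟨hq, hr⟩
    · exact ⟨q, r, hqr, hq, hr⟩
    · exact ⟨r, q, hqr.symm, hr, hq⟩

variable {T₁ T₂ : MarkedTree n} {c₁ : TreeContraction T T₁} {c₂ : TreeContraction T T₂}

theorem map_eq_of_forest_subset (hsub : c₁.forest ⊆ c₂.forest) {x y : T.V}
    (h : c₁.f x = c₁.f y) : c₂.f x = c₂.f y := by
  have hr := (c₁.fiber_conn (c₁.f x)).preconnected ⟨x, rfl⟩ ⟨y, h.symm⟩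
  rw [reachable_iff_reflTransGen] at hr
  have hstep (a b : c₁.f ⁻¹' {c₁.f x}) (hab : (T.G.induce _).Adj a b) : c₂.f a = c₂.f b :=
    (c₂.mem_forest_iff.mp (hsub (c₁.mem_forest_iff.mpr ⟨hab, a.2.trans b.2.symm⟩))).2
  have := Relation.ReflTransGen.lift (p := Eq) (fun u : c₁.f ⁻¹' {c₁.f x} ↦ c₂.f u) hstep _ _ hr
  rwa [Relation.reflTransGen_eq_self] at this

theorem surjInv_map_eq (hsub : c₁.forest ⊆ c₂.forest) (x : T.V) :
    c₂.f (Function.surjInv c₁.surj (c₁.f x)) = c₂.f x :=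
  map_eq_of_forest_subset hsub (Function.surjInv_eq c₁.surj _)

variable (c₁ c₂) in
noncomputable def factor (hsub : c₁.forest ⊆ c₂.forest) : TreeContraction T₁ T₂ where
  f := c₂.f ∘ Function.surjInv c₁.surj
  surj w := by
    obtain ⟨x, rfl⟩ := c₂.surj w
    exact ⟨c₁.f x, surjInv_map_eq hsub x⟩
  map_adj hab := by
    obtain ⟨p, q, hpq, rfl, rfl⟩ := c₁.exists_adj_map_eq_s13 hab
    simp only [Function.comp_apply, surjInv_map_eq hsub]
    exact c₂.map_adj hpq
  fiber_conn w := by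
    have hst : Set.MapsTo c₁.f (c₂.f ⁻¹' {w}) ((c₂.f ∘ Function.surjInv c₁.surj) ⁻¹' {w}) :=
      fun u hu ↦ by simpa [surjInv_map_eq hsub] using hu
    refine (connected_iff _).mpr ⟨fun ⟨a, ha⟩ ⟨b, hb⟩ ↦ ?_, ?_⟩
    · obtain ⟨x, rfl⟩ := c₁.surj a
      obtain ⟨y, rfl⟩ := c₁.surj b
      simp only [Set.mem_preimage, Function.comp_apply, surjInv_map_eq hsub] at ha hb
      exact ((c₂.fiber_conn w).preconnected ⟨x, ha⟩ ⟨y, hb⟩).map_induce c₁.map_adj hst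
    · obtain ⟨x, hx⟩ := c₂.surj w
      exact ⟨hst.restrict _ _ _ ⟨x, hx⟩⟩
  map_mark i := by
    rw [Function.comp_apply, ← c₁.map_mark i, surjInv_map_eq hsub, c₂.map_mark]

end TreeContraction

/-- Given contractions `Γ → Γ₁` and `Γ → Γ₂` of marked `n`-trees,
there is a contraction `Γ₁ → Γ₂` if and only if the subforest `F(Γ,Γ₁)` is a
subforest of `F(Γ,Γ₂)`. -/
theorem contraction_exists_iff_subforest {n : ℕ} (T T₁ T₂ : MarkedTree n)
    (c₁ : TreeContraction T T₁) (c₂ : TreeContraction T T₂) :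
    Nonempty (TreeContraction T₁ T₂) ↔ c₁.forest ⊆ c₂.forest := by
  refine ⟨fun ⟨g⟩ ↦ ?_, fun hsub ↦ ⟨c₁.factor c₂ hsub⟩⟩
  have hcomp : g.f ∘ c₁.f = c₂.f :=
    T.eq_of_preservesBetween (g.preservesBetween.comp c₁.preservesBetween)
      c₂.preservesBetween (fun i ↦ by simp [c₁.map_mark, g.map_mark]) c₂.map_mark
  rintro _ ⟨a, b, rfl, hab, he⟩
  exact ⟨a, b, rfl, hab, by rw [← hcomp, Function.comp_apply, Function.comp_apply, he]⟩
end

section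
/- Let G be a group acting freely on a poset P by order-preserving automorphisms (g·x ≤ g·y iff x ≤ y), and suppose that for all x, y ∈ P, if g·x ≤ y and h·x ≤ y for g, h ∈ G then g = h. Then for any x ∈ P, the quotient map P → P/G restricts to an order isomorphism from the lower set ↓(x) in P onto the lower set of the orbit [x] in P/G. -/
/-- The induced relation on the orbit quotient of a poset under a group action. -/
def OrbLe {G P : Type} [Group G] [PartialOrder P] [MulAction G P]
    (q₁ q₂ : Quotient (MulAction.orbitRel G P)) : Prop :=
  ∃ a b : P, Quotient.mk (MulAction.orbitRel G P) a = q₁ ∧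
    Quotient.mk (MulAction.orbitRel G P) b = q₂ ∧ a ≤ b

/-- If a group `G` acts freely on a poset `P` by order-preserving
automorphisms, and whenever `g • x ≤ y` and `h • x ≤ y` we have `g = h`, then for
every `x ∈ P` the quotient map restricts to an order isomorphism from the lower set
`↓(x)` in `P` onto the lower set of the orbit `[x]` in `P/G`. -/
theorem quotient_lowerSet_orderIso {G P : Type} [Group G] [PartialOrder P]
    [MulAction G P]
    (hord : ∀ (g : G) (x y : P), g • x ≤ g • y ↔ x ≤ y)
    (hfree : ∀ (g : G) (x : P), g • x = x → g = 1)
    (huniq : ∀ (g h : G) (x y : P), g • x ≤ y → h • x ≤ y → g = h)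
    (x : P) :
    ∃ e : Set.Iic x ≃ {q : Quotient (MulAction.orbitRel G P) //
        OrbLe q (Quotient.mk (MulAction.orbitRel G P) x)},
      (∀ s : Set.Iic x, (e s).1 = Quotient.mk (MulAction.orbitRel G P) s.1) ∧
      ∀ s t : Set.Iic x, s.1 ≤ t.1 ↔ OrbLe (e s).1 (e t).1 := by
  set R := MulAction.orbitRel G P
  -- key: if ⟦a⟧ = ⟦b⟧ with a ≤ x and b ≤ x then a = b
  have key : ∀ a b : P, a ≤ x → b ≤ x →
      Quotient.mk R a = Quotient.mk R b → a = b := by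
    intro a b ha hb hq
    have h : R.r a b := Quotient.exact hq
    obtain ⟨g, (hg : g • b = a)⟩ := h
    have h1 : g • b ≤ x := by rw [hg]; exact ha
    have h2 : (1 : G) • b ≤ x := by rw [one_smul]; exact hb
    have : g = 1 := huniq g 1 b x h1 h2
    rw [this] at hg; simpa using hg.symm
  let f : Set.Iic x → {q : Quotient R // OrbLe q (Quotient.mk R x)} :=
    fun s => ⟨Quotient.mk R s.1, s.1, x, rfl, rfl, s.2⟩
  have hbij : Function.Bijective f := by
    constructor
    · intro s t hst
      have : Quotient.mk R s.1 = Quotient.mk R t.1 := congrArg Subtype.val hst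
      exact Subtype.ext (key s.1 t.1 s.2 t.2 this)
    · rintro ⟨q, a, b, ha, hb, hab⟩
      obtain ⟨g, (hg : g • x = b)⟩ : R.r b x := Quotient.exact hb
      have hle : g⁻¹ • a ≤ x := by
        have hab' : a ≤ g • x := by rw [hg]; exact hab
        have := (hord g⁻¹ a (g • x)).2 hab'
        simpa using this
      refine ⟨⟨g⁻¹ • a, hle⟩, Subtype.ext ?_⟩
      show Quotient.mk R (g⁻¹ • a) = q
      rw [← ha]
      exact Quotient.sound ⟨g⁻¹, rfl⟩
  refine ⟨Equiv.ofBijective f hbij, fun s => rfl, fun s t => ?_⟩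
  constructor
  · intro h
    exact ⟨s.1, t.1, rfl, rfl, h⟩
  · rintro ⟨a, b, ha, hb, hab⟩
    obtain ⟨g, (hg : g • s.1 = a)⟩ : R.r a s.1 := Quotient.exact ha
    obtain ⟨h, (hh : h • t.1 = b)⟩ : R.r b t.1 := Quotient.exact hb
    -- a = g • s, b = h • t, a ≤ b so g • s ≤ h • t, so (h⁻¹ * g) • s ≤ t
    have h1 : (h⁻¹ * g) • s.1 ≤ t.1 := by
      have : h⁻¹ • a ≤ h⁻¹ • b := (hord h⁻¹ a b).2 hab
      rw [← hg, ← hh] at this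
      simpa [mul_smul] using this
    have h2 : (h⁻¹ * g) • s.1 ≤ x := h1.trans t.2
    have h3 : (1 : G) • s.1 ≤ x := by rw [one_smul]; exact s.2
    have : h⁻¹ * g = 1 := huniq _ 1 s.1 x h2 h3
    rw [this] at h1; simpa using h1
end
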